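/- Let H be the Hamiltonian on two copies of the n-qubit Hilbert space given by H = Σ_{α<β<γ} X_α^{s_α} ⊗ (Y_{βγ}^{s_β,s_γ} + Y_{βγ}^{s_β,s_γ†})/2, with the operators X and Y defined from pairs of qubit indices as in the graph-state construction. Then for any graph state |G(A)⟩, ⟨G(A)|^{⊗2} H |G(A)⟩^{⊗2} = Σ_{α<β<γ} (x_α ⊕ s_α)(x_β ⊕ s_β)(x_γ ⊕ s_γ), where x_α = (1+(−1)^{A_α})/2 ∈ {0,1} are the edge indicator variables of A and ⊕ denotes addition modulo 2. -/

import Mathlib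

/-! Both copies carry the same state, so each Kronecker term factorises into single-copy
expectations. `X` and `Y` are rank one, built from `|0⟩` and `|e_i + e_j⟩`, whose amplitudes in
`|G(A)⟩` are `2^{-n/2}` and `2^{-n/2} (-1)^{A_ij}`. Hence `⟨G|X^s(i,j)|G⟩ = x_ij ⊕ s` and
`⟨G|Y^{s,s'}(i,j,k,l)|G⟩ = (x_ij ⊕ s)(x_kl ⊕ s')`, which is symmetric in the two pairs, so `Y`
and `Yᴴ` have the same expectation. -/

open Matrix Kronecker

noncomputable def graphState {n : ℕ} (A : Matrix (Fin n) (Fin n) (ZMod 2)) :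
    (Fin n → ZMod 2) → ℂ :=
  fun x => (Real.sqrt (2 ^ n) : ℂ)⁻¹ *
    (-1 : ℂ) ^ ((∑ i : Fin n, ∑ j ∈ Finset.univ.filter (fun j => i < j),
      A i j * x i * x j).val)

def pairIndicator {n : ℕ} (i j : Fin n) : Fin n → ZMod 2 :=
  fun k => if k = i ∨ k = j then 1 else 0

noncomputable def xVec {n : ℕ} (s : ZMod 2) (i j : Fin n) : (Fin n → ZMod 2) → ℂ :=
  fun x => (if x = 0 then 1 else 0) +
    (-1 : ℂ) ^ s.val * (if x = pairIndicator i j then 1 else 0)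

noncomputable def Xop {n : ℕ} (s : ZMod 2) (i j : Fin n) :
    Matrix (Fin n → ZMod 2) (Fin n → ZMod 2) ℂ :=
  ((2 ^ n : ℂ) / 4) • Matrix.vecMulVec (xVec s i j) (xVec s i j)

/-- `Y^{s,s'}(i,j,k,l) = (d/4)(|0⟩+(−1)^s|e_i+e_j⟩)(⟨0|+(−1)^{s'}⟨e_k+e_l|)`. -/
noncomputable def Yop {n : ℕ} (s s' : ZMod 2) (i j k l : Fin n) :
    Matrix (Fin n → ZMod 2) (Fin n → ZMod 2) ℂ :=
  ((2 ^ n : ℂ) / 4) • Matrix.vecMulVec (xVec s i j) (xVec s' k l)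

/-- Two identical copies of a graph state. -/
noncomputable def gg {n : ℕ} (A : Matrix (Fin n) (Fin n) (ZMod 2)) :
    ((Fin n → ZMod 2) × (Fin n → ZMod 2)) → ℂ :=
  fun p => graphState A p.1 * graphState A p.2

/-- The edge-indicator bit `x_α = (1+(−1)^{A_α})/2 ∈ {0,1}` of the pair `α = (i,j)`,
as an element of `ZMod 2`. -/
def xbit {n : ℕ} (A : Matrix (Fin n) (Fin n) (ZMod 2)) (p : Fin n × Fin n) : ZMod 2 :=
  if A p.1 p.2 = 0 then 1 else 0

section ProductStates

variable {R ι κ : Type*} [CommSemiring R] [Fintype ι] [Fintype κ]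

lemma kronecker_mulVec_prod (M : Matrix ι ι R) (N : Matrix κ κ R) (g : ι → R) (h : κ → R) :
    (M ⊗ₖ N) *ᵥ (fun p => g p.1 * h p.2) = fun p => (M *ᵥ g) p.1 * (N *ᵥ h) p.2 := by
  funext p
  simp only [mulVec, dotProduct, kroneckerMap_apply, Fintype.sum_prod_type, Finset.sum_mul_sum]
  exact Finset.sum_congr rfl fun _ _ => Finset.sum_congr rfl fun _ _ => by ring

lemma star_prod_dotProduct_prod [StarRing R] (g u : ι → R) (h v : κ → R) :
    star (fun p : ι × κ => g p.1 * h p.2) ⬝ᵥ (fun p => u p.1 * v p.2)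
      = (star g ⬝ᵥ u) * (star h ⬝ᵥ v) := by
  simp only [dotProduct, Pi.star_apply, star_mul', Fintype.sum_prod_type, Finset.sum_mul_sum]
  exact Finset.sum_congr rfl fun _ _ => Finset.sum_congr rfl fun _ _ => by ring

lemma expectation_kronecker_prod [StarRing R] (M : Matrix ι ι R) (N : Matrix κ κ R)
    (g : ι → R) (h : κ → R) :
    star (fun p : ι × κ => g p.1 * h p.2) ⬝ᵥ ((M ⊗ₖ N) *ᵥ fun p => g p.1 * h p.2)
      = (star g ⬝ᵥ (M *ᵥ g)) * (star h ⬝ᵥ (N *ᵥ h)) := by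
  rw [kronecker_mulVec_prod, star_prod_dotProduct_prod]

lemma dotProduct_vecMulVec_mulVec (ψ u w g : ι → R) :
    ψ ⬝ᵥ (vecMulVec u w *ᵥ g) = (ψ ⬝ᵥ u) * (w ⬝ᵥ g) := by
  rw [vecMulVec_mulVec, op_smul_eq_smul, dotProduct_smul, smul_eq_mul, mul_comm]

end ProductStates

lemma neg_one_pow_val_mul_add_one (a b : ZMod 2) :
    1 + (-1 : ℂ) ^ a.val * (-1) ^ b.val = 2 * ((a + b + 1).val : ℂ) := by
  fin_cases a <;> fin_cases b <;> norm_num [ZMod.val] <;> exact Nat.cast_eq_one.mpr rfl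

lemma val_mul_self_zmod_two (a : ZMod 2) : (a.val : ℂ) * a.val = a.val := by
  fin_cases a <;> norm_num [ZMod.val]

lemma xbit_eq {n : ℕ} (A : Matrix (Fin n) (Fin n) (ZMod 2)) (i j : Fin n) :
    xbit A (i, j) = A i j + 1 := by
  unfold xbit
  generalize A i j = a
  fin_cases a <;> rfl

lemma inv_sqrt_two_pow_mul_self (n : ℕ) :
    (Real.sqrt (2 ^ n) : ℂ)⁻¹ * (Real.sqrt (2 ^ n) : ℂ)⁻¹ = ((2 : ℂ) ^ n)⁻¹ := by
  rw [← mul_inv, ← Complex.ofReal_mul, Real.mul_self_sqrt (by positivity)]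
  norm_num

section GraphState

variable {n : ℕ} (A : Matrix (Fin n) (Fin n) (ZMod 2))

lemma sum_upper_mul_pairIndicator {i j : Fin n} (hij : i < j) :
    ∑ k : Fin n, ∑ l ∈ Finset.univ.filter (fun l => k < l),
      A k l * pairIndicator i j k * pairIndicator i j l = A i j := by
  have hterm : ∀ k l : Fin n, k < l →
      A k l * pairIndicator i j k * pairIndicator i j l = if k = i ∧ l = j then A i j else 0 := by
    intro k l hkl
    unfold pairIndicator
    split_ifs <;> grind
  rw [Finset.sum_congr rfl fun k _ => Finset.sum_congr rfl fun l hl =>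
    hterm k l (Finset.mem_filter.mp hl).2]
  simp [ite_and, hij]

lemma graphState_zero : graphState A 0 = (Real.sqrt (2 ^ n) : ℂ)⁻¹ := by
  simp [graphState]

lemma graphState_pairIndicator {i j : Fin n} (hij : i < j) :
    graphState A (pairIndicator i j) = (Real.sqrt (2 ^ n) : ℂ)⁻¹ * (-1) ^ (A i j).val := by
  rw [graphState, sum_upper_mul_pairIndicator A hij]

lemma star_graphState : star (graphState A) = graphState A := by
  funext x
  simp [graphState]

lemma xVec_eq_single (s : ZMod 2) (i j : Fin n) :
    xVec s i j = Pi.single 0 1 + (-1 : ℂ) ^ s.val • Pi.single (pairIndicator i j) 1 := by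
  funext x
  simp [xVec, Pi.single_apply]

lemma star_xVec (s : ZMod 2) (i j : Fin n) : star (xVec s i j) = xVec s i j := by
  rw [xVec_eq_single]
  simp

lemma graphState_dotProduct_xVec (s : ZMod 2) {i j : Fin n} (hij : i < j) :
    graphState A ⬝ᵥ xVec s i j
      = 2 * (Real.sqrt (2 ^ n) : ℂ)⁻¹ * ((xbit A (i, j) + s).val : ℂ) := by
  rw [xVec_eq_single, dotProduct_add, dotProduct_smul, dotProduct_single_one,
    dotProduct_single_one, graphState_zero, graphState_pairIndicator A hij, smul_eq_mul, xbit_eq,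
    show A i j + 1 + s = s + A i j + 1 by ring]
  linear_combination (Real.sqrt (2 ^ n) : ℂ)⁻¹ * neg_one_pow_val_mul_add_one s (A i j)

end GraphState

section Expectation

variable {n : ℕ} (A : Matrix (Fin n) (Fin n) (ZMod 2))

lemma expectation_Yop (s s' : ZMod 2) {i j k l : Fin n} (hij : i < j) (hkl : k < l) :
    star (graphState A) ⬝ᵥ (Yop s s' i j k l *ᵥ graphState A)
      = ((xbit A (i, j) + s).val : ℂ) * ((xbit A (k, l) + s').val : ℂ) := by
  rw [Yop, smul_mulVec, dotProduct_smul, dotProduct_vecMulVec_mulVec, star_graphState,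
    dotProduct_comm (xVec s' k l), graphState_dotProduct_xVec A s hij,
    graphState_dotProduct_xVec A s' hkl, smul_eq_mul]
  have hnorm : (Real.sqrt (2 ^ n) : ℂ)⁻¹ * (Real.sqrt (2 ^ n) : ℂ)⁻¹ * 2 ^ n = 1 := by
    rw [inv_sqrt_two_pow_mul_self, inv_mul_cancel₀ (pow_ne_zero _ two_ne_zero)]
  linear_combination ((xbit A (i, j) + s).val * (xbit A (k, l) + s').val : ℂ) * hnorm

lemma expectation_Xop (s : ZMod 2) {i j : Fin n} (hij : i < j) :
    star (graphState A) ⬝ᵥ (Xop s i j *ᵥ graphState A) = ((xbit A (i, j) + s).val : ℂ) := by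
  rw [show Xop s i j = Yop s s i j i j from rfl, expectation_Yop A s s hij hij,
    val_mul_self_zmod_two]

lemma Yop_conjTranspose (s s' : ZMod 2) (i j k l : Fin n) :
    (Yop s s' i j k l)ᴴ = Yop s' s k l i j := by
  rw [Yop, Yop, conjTranspose_smul, conjTranspose_vecMulVec, star_xVec, star_xVec]
  congr 1
  simp

end Expectation

theorem stmt10_general {n m : ℕ} (A : Matrix (Fin n) (Fin n) (ZMod 2))
    (e : Fin m → Fin n × Fin n) (he : ∀ α, (e α).1 < (e α).2)
    (s : Fin m → ZMod 2) :
    star (gg A) ⬝ᵥ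
      ((∑ α : Fin m, ∑ β ∈ Finset.univ.filter (fun β => α < β),
          ∑ γ ∈ Finset.univ.filter (fun γ => β < γ),
          (Xop (s α) (e α).1 (e α).2) ⊗ₖ
            ((2 : ℂ)⁻¹ • (Yop (s β) (s γ) (e β).1 (e β).2 (e γ).1 (e γ).2 +
              (Yop (s β) (s γ) (e β).1 (e β).2 (e γ).1 (e γ).2)ᴴ))) *ᵥ gg A)
      = ∑ α : Fin m, ∑ β ∈ Finset.univ.filter (fun β => α < β),
          ∑ γ ∈ Finset.univ.filter (fun γ => β < γ),
          ((xbit A (e α) + s α).val : ℂ) * ((xbit A (e β) + s β).val : ℂ) *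
            ((xbit A (e γ) + s γ).val : ℂ) := by
  simp only [sum_mulVec, dotProduct_sum]
  refine Finset.sum_congr rfl fun α _ => Finset.sum_congr rfl fun β _ =>
    Finset.sum_congr rfl fun γ _ => ?_
  unfold gg
  rw [expectation_kronecker_prod, expectation_Xop A _ (he α), smul_mulVec, add_mulVec,
    dotProduct_smul, dotProduct_add, Yop_conjTranspose, expectation_Yop A _ _ (he β) (he γ),
    expectation_Yop A _ _ (he γ) (he β), smul_eq_mul]
  ring

/-- `⟨G(A)|^{⊗2} H |G(A)⟩^{⊗2} = Σ_{α<β<γ} (x_α⊕s_α)(x_β⊕s_β)(x_γ⊕s_γ)` for the Hamiltonian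
`H = Σ_{α<β<γ} X_α^{s_α} ⊗ (Y_{βγ}^{s_β,s_γ} + Y_{βγ}^{s_β,s_γ†})/2`. -/
theorem stmt10 {n m : ℕ} (A : Matrix (Fin n) (Fin n) (ZMod 2)) (hA : A.IsSymm)
    (hdiag : ∀ i, A i i = 0)
    (e : Fin m → Fin n × Fin n) (he : ∀ α, (e α).1 < (e α).2)
    (s : Fin m → ZMod 2) :
    star (gg A) ⬝ᵥ
      ((∑ α : Fin m, ∑ β ∈ Finset.univ.filter (fun β => α < β),
          ∑ γ ∈ Finset.univ.filter (fun γ => β < γ),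
          (Xop (s α) (e α).1 (e α).2) ⊗ₖ
            ((2 : ℂ)⁻¹ • (Yop (s β) (s γ) (e β).1 (e β).2 (e γ).1 (e γ).2 +
              (Yop (s β) (s γ) (e β).1 (e β).2 (e γ).1 (e γ).2)ᴴ))) *ᵥ gg A)
      = ∑ α : Fin m, ∑ β ∈ Finset.univ.filter (fun β => α < β),
          ∑ γ ∈ Finset.univ.filter (fun γ => β < γ),
          ((xbit A (e α) + s α).val : ℂ) * ((xbit A (e β) + s β).val : ℂ) *
            ((xbit A (e γ) + s γ).val : ℂ) :=
  stmt10_general A e he s
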